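/- The union of any two equivalent pencils is a pencil, equivalent to the given pencils. -/

import Mathlib

/-- An incidence plane: points, lines, and an incidence relation. -/
structure IncidencePlane where
  Point : Type
  Line : Type
  mem : Point → Line → Prop

namespace IncidencePlane

variable (G : IncidencePlane)

/-- Lines `l` and `m` intersect: they are distinct and have a common point. -/
def Intersect (l m : G.Line) : Prop := l ≠ m ∧ ∃ Q, G.mem Q l ∧ G.mem Q m

/-- Parallel is the negation of intersecting. -/
def Par (l m : G.Line) : Prop := ¬ G.Intersect l m

/-- The point set of a line. -/
def lineSet (l : G.Line) : Set G.Point := {Q | G.mem Q l}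

/-- The pencil of all lines through a point `Q`, written `Q*`. -/
def pointPencil (Q : G.Point) : Set G.Line := {l | G.mem Q l}

/-- The pencil of all lines parallel to `l`, written `l*`. -/
def parPencil (l : G.Line) : Set G.Line := {m | G.Par m l}

/-- A regular pencil has the form `Q*` or `l*`. -/
def Regular (ρ : Set G.Line) : Prop :=
  (∃ Q, ρ = G.pointPencil Q) ∨ (∃ l, ρ = G.parPencil l)

/-- A pencil: (1) it cannot contain fewer than two lines; (2) two distinct
lines of it lying in a regular pencil `ρ` force inclusion in `ρ`. -/
def IsPencil (α : Set G.Line) : Prop :=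
  (¬ ∀ l ∈ α, ∀ m ∈ α, l = m) ∧
  (∀ ρ : Set G.Line, G.Regular ρ → ∀ l ∈ α, ∀ m ∈ α, l ≠ m → l ∈ ρ → m ∈ ρ → α ⊆ ρ)

/-- A complete pencil: two distinct lines of it in a regular pencil `ρ` force equality with `ρ`. -/
def Complete (α : Set G.Line) : Prop :=
  ∀ ρ : Set G.Line, G.Regular ρ → ∀ l ∈ α, ∀ m ∈ α, l ≠ m → l ∈ ρ → m ∈ ρ → α = ρ

/-- A strictly complete pencil: contained in a regular pencil implies equal to it. -/
def StrictlyComplete (α : Set G.Line) : Prop :=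
  ∀ ρ : Set G.Line, G.Regular ρ → α ⊆ ρ → α = ρ

/-- `l` lies outside the family `α`: it differs from every line of `α`. -/
def LineOutside (l : G.Line) (α : Set G.Line) : Prop := ∀ m ∈ α, l ≠ m

/-- Pencils `α` and `β` are distinct: some line of one lies outside the other. -/
def PDistinct (α β : Set G.Line) : Prop :=
  (∃ l ∈ α, G.LineOutside l β) ∨ (∃ l ∈ β, G.LineOutside l α)

/-- Pencils are equivalent when they are contained in exactly the same regular pencils. -/
def PEquiv (α β : Set G.Line) : Prop :=
  ∀ ρ : Set G.Line, G.Regular ρ → (α ⊆ ρ ↔ β ⊆ ρ)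

/-- A parallel pencil: a pencil any two of whose lines are parallel. -/
def ParallelPencil (α : Set G.Line) : Prop :=
  G.IsPencil α ∧ ∀ l ∈ α, ∀ m ∈ α, G.Par l m

/-- Point `Q` lies outside line `l`: it differs from every point of `l`. -/
def PointOutside (Q : G.Point) (l : G.Line) : Prop := ∀ R, G.mem R l → Q ≠ R

/-- The union of all pencils equivalent to `α` (the full pencil `α'`). -/
def fullPencil (α : Set G.Line) : Set G.Line :=
  ⋃₀ {β | G.IsPencil β ∧ G.PEquiv β α}

/-- The core of two pencils: points lying on a common line of the two pencils. -/
def core (α β : Set G.Line) : Set G.Point :=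
  {Q | ∃ l, l ∈ α ∩ β ∧ G.mem Q l}

/-- A virtual line: a set of points which is a line whenever it is inhabited. -/
def VLine (p : Set G.Point) : Prop :=
  p.Nonempty → ∃ l : G.Line, p = G.lineSet l

/-- Distinctness of virtual lines. -/
def VDistinct (p q : Set G.Point) : Prop :=
  ¬ (p = q) ∧ ∀ l m : G.Line, p = G.lineSet l → q = G.lineSet m → l ≠ m

/-- Equivalence of virtual lines: the negation of distinctness. -/
def VEquiv (p q : Set G.Point) : Prop := ¬ G.VDistinct p q

/-- The union of all virtual lines equivalent to `p`. -/
def vfull (p : Set G.Point) : Set G.Point :=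
  ⋃₀ {q | G.VLine q ∧ G.VEquiv q p}

/-- The axioms of an incidence plane used in this paper. -/
structure Axioms (G : IncidencePlane) : Prop where
  join : ∀ Q R : G.Point, Q ≠ R → ∃ l, G.mem Q l ∧ G.mem R l
  join_unique : ∀ Q R : G.Point, Q ≠ R → ∀ l m : G.Line,
      G.mem Q l → G.mem R l → G.mem Q m → G.mem R m → l = m
  cross_unique : ∀ l m : G.Line, l ≠ m → ∀ Q R : G.Point,
      G.mem Q l → G.mem Q m → G.mem R l → G.mem R m → Q = R
  parPost : ∀ (Q : G.Point) (l : G.Line), ∃ n, G.mem Q n ∧ G.Par n l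
  parPost_unique : ∀ (Q : G.Point) (l : G.Line) (n n' : G.Line),
      G.mem Q n → G.Par n l → G.mem Q n' → G.Par n' l → n = n'
  par_int : ∀ n₁ n₂ l m : G.Line,
      G.Par n₁ l → G.Par n₂ m → G.Intersect l m → G.Intersect n₁ n₂
  not_pointOutside : ∀ (Q : G.Point) (l : G.Line), ¬ G.PointOutside Q l → G.mem Q l
  two_points : ∀ l : G.Line, ∃ Q R : G.Point, Q ≠ R ∧ G.mem Q l ∧ G.mem R l
  exists_intersecting : ∃ l m : G.Line, G.Intersect l m

end IncidencePlane

open IncidencePlane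

/-!
Both pencils lie in one regular pencil `σ`: a pencil lies in the regular pencil spanned by two
of its lines, and equivalence carries this inclusion from `α` to `β`. Distinct regular pencils
share at most one line, so a regular pencil `ρ` containing two distinct lines of `α ∪ β`
contains `σ ⊇ α`, hence also `β`.
-/

namespace IncidencePlane

variable {G : IncidencePlane}

theorem par_refl (l : G.Line) : G.Par l l := fun ⟨hne, _⟩ => hne rfl

theorem par_symm {l m : G.Line} (h : G.Par l m) : G.Par m l :=
  fun ⟨hne, Q, hl, hm⟩ => h ⟨hne.symm, Q, hm, hl⟩

theorem Regular.subset_of_two_mem (ax : G.Axioms) {σ ρ : Set G.Line}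
    (hσ : G.Regular σ) (hρ : G.Regular ρ) {l m : G.Line} (hlm : l ≠ m)
    (hlσ : l ∈ σ) (hmσ : m ∈ σ) (hlρ : l ∈ ρ) (hmρ : m ∈ ρ) : σ ⊆ ρ := by
  rcases hσ with ⟨Q, rfl⟩ | ⟨a, rfl⟩ <;> rcases hρ with ⟨R, rfl⟩ | ⟨b, rfl⟩
  · obtain rfl : Q = R := ax.cross_unique l m hlm Q R hlσ hmσ hlρ hmρ
    exact subset_rfl
  · exact absurd (ax.parPost_unique Q b l m hlσ hlρ hmσ hmρ) hlm
  · exact absurd (ax.parPost_unique R a l m hlρ hlσ hmρ hmσ) hlm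
  · have hab : G.Par a b := by
      intro hint
      obtain ⟨-, P, hPl, hPm⟩ := ax.par_int l m a b hlσ hmρ hint
      exact hlm (ax.parPost_unique P a l m hPl hlσ hPm hmσ)
    exact fun n hn hnb => hab (ax.par_int a b n b (par_symm hn) (par_refl b) hnb)

theorem IsPencil.exists_regular_superset {α : Set G.Line} (hα : G.IsPencil α) :
    ∃ σ, G.Regular σ ∧ α ⊆ σ := by
  obtain ⟨hnt, hsub⟩ := hα
  push Not at hnt
  obtain ⟨l, hl, m, hm, hlm⟩ := hnt
  by_cases hint : G.Intersect l m
  · obtain ⟨-, Q, hQl, hQm⟩ := hint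
    exact ⟨_, Or.inl ⟨Q, rfl⟩, hsub _ (Or.inl ⟨Q, rfl⟩) l hl m hm hlm hQl hQm⟩
  · exact ⟨_, Or.inr ⟨l, rfl⟩,
      hsub _ (Or.inr ⟨l, rfl⟩) l hl m hm hlm (par_refl l) (par_symm hint)⟩

theorem PEquiv.symm {α β : Set G.Line} (h : G.PEquiv α β) : G.PEquiv β α :=
  fun ρ hρ => (h ρ hρ).symm

theorem PEquiv.union_left {α β : Set G.Line} (h : G.PEquiv α β) : G.PEquiv (α ∪ β) α :=
  fun ρ hρ => ⟨fun hs => (Set.union_subset_iff.mp hs).1,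
    fun hs => Set.union_subset hs ((h ρ hρ).mp hs)⟩

theorem IsPencil.union_of_pEquiv (ax : G.Axioms) {α β : Set G.Line} (hα : G.IsPencil α)
    (h : G.PEquiv α β) : G.IsPencil (α ∪ β) := by
  obtain ⟨σ, hσ, hασ⟩ := hα.exists_regular_superset
  have hβσ : β ⊆ σ := (h σ hσ).mp hασ
  refine ⟨fun hall => hα.1 fun l hl m hm => hall l (.inl hl) m (.inl hm), ?_⟩
  intro ρ hρ l hl m hm hlm hlρ hmρ
  have hαρ : α ⊆ ρ := hασ.trans <| hσ.subset_of_two_mem ax hρ hlm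
    (Set.union_subset hασ hβσ hl) (Set.union_subset hασ hβσ hm) hlρ hmρ
  exact Set.union_subset hαρ ((h ρ hρ).mp hαρ)

end IncidencePlane

theorem union_equiv_pencils_general (G : IncidencePlane) (ax : G.Axioms)
    (α β : Set G.Line) (hα : G.IsPencil α)
    (h : G.PEquiv α β) :
    G.IsPencil (α ∪ β) ∧ G.PEquiv (α ∪ β) α ∧ G.PEquiv (α ∪ β) β :=
  ⟨hα.union_of_pEquiv ax h, h.union_left, Set.union_comm α β ▸ h.symm.union_left⟩

/-- the union of two equivalent pencils is a pencil equivalent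
to the given pencils. -/
theorem union_equiv_pencils (G : IncidencePlane) (ax : G.Axioms)
    (α β : Set G.Line) (hα : G.IsPencil α) (hβ : G.IsPencil β)
    (h : G.PEquiv α β) :
    G.IsPencil (α ∪ β) ∧ G.PEquiv (α ∪ β) α ∧ G.PEquiv (α ∪ β) β :=
  union_equiv_pencils_general G ax α β hα h
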